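/- Safety of discarding outdated base pages: if for every column ever updated, the first update appends a tail record snapshotting the original base value, then every historical version of every record is recoverable from the tail records together with the merged pages alone; hence deallocating original base pages after merge loses no information. -/
import Mathlib


/-- The last value assigned to column `c` by a list of (partial) updates, if any. -/
def lastAssigned {Col Value : Type} (us : List (Col → Option Value)) (c : Col) :
    Option Value :=
  us.foldl (fun acc u => ((u c).orElse (fun _ => acc))) none

/-- The tail log produced by the update procedure: for the `i`-th update, first a
snapshot entry `(c, b c)` for every column `c` that is updated by `u_i` for the first
time (no earlier update touches `c`), followed by an entry `(c, v)` for every column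
`c` to which `u_i` assigns the value `v`. -/
noncomputable def tailLog {Col Value : Type} [Fintype Col] (b : Col → Value)
    (us : List (Col → Option Value)) : List (Col × Value) :=
  (List.range us.length).flatMap (fun i =>
    let u := us.getD i (fun _ => none)
    let snaps := Finset.univ.toList.filterMap (fun c =>
      if (u c).isSome = true ∧ ∀ j < i, ((us.getD j (fun _ => none)) c).isNone = true
      then some (c, b c) else none)
    let upds := Finset.univ.toList.filterMap (fun c => (u c).map (fun v => (c, v)))
    snaps ++ upds)

theorem lastAssigned_some {Col Value : Type} {us : List (Col → Option Value)} {c : Col}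
    {v : Value} (h : lastAssigned us c = some v) : ∃ u ∈ us, u c = some v := by
  induction us using List.reverseRecOn with
  | nil => simp [lastAssigned] at h
  | append_singleton us u ih =>
    rw [lastAssigned, List.foldl_append] at h
    simp only [List.foldl_cons, List.foldl_nil] at h
    cases hu : u c with
    | some w =>
      rw [hu] at h
      simp only [Option.orElse] at h
      exact ⟨u, by simp, by rw [hu, h]⟩
    | none =>
      rw [hu] at h
      simp only [Option.orElse] at h
      obtain ⟨w, hw, h'⟩ := ih h
      exact ⟨w, by simp [hw], h'⟩

theorem getD_eq {Col Value : Type} {us : List (Col → Option Value)} {i : ℕ}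
    (hi : i < us.length) : us.getD i (fun _ => none) = us[i] := by
  rw [List.getD_eq_getElem?_getD, List.getElem?_eq_getElem hi, Option.getD_some]

/-- Safety of discarding outdated base pages: because the first update to any column
appends a snapshot of the original base value, every historical version of the record
on every ever-updated column occurs in the tail log; hence the tail log alone (without
the base pages) determines all historical versions on ever-updated columns. -/
theorem tail_log_preserves_history {Col Value : Type} [Fintype Col]
    (b : Col → Value) (us : List (Col → Option Value))
    (n : ℕ) (hn : n ≤ us.length) (c : Col)
    (hc : ∃ u ∈ us, (u c).isSome = true) :
    (c, (lastAssigned (us.take n) c).getD (b c)) ∈ tailLog b us := by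
  classical
  cases hl : lastAssigned (us.take n) c with
  | some v =>
    obtain ⟨u, hu, huc⟩ := lastAssigned_some hl
    have hu' : u ∈ us := List.mem_of_mem_take hu
    obtain ⟨i, hi, hget⟩ := List.getElem_of_mem hu'
    rw [tailLog, List.mem_flatMap]
    refine ⟨i, List.mem_range.mpr hi, ?_⟩
    simp only
    apply List.mem_append_right
    rw [List.mem_filterMap]
    refine ⟨c, by simp, ?_⟩
    rw [getD_eq hi, hget, huc]
    rfl
  | none =>
    obtain ⟨u, hu, huc⟩ := hc
    obtain ⟨i, hi, hget⟩ := List.getElem_of_mem hu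
    have hP : ∃ j, ((us.getD j (fun _ => none)) c).isSome = true :=
      ⟨i, by rw [getD_eq hi, hget]; exact huc⟩
    set i0 := Nat.find hP with hi0
    have hPi0 : ((us.getD i0 (fun _ => none)) c).isSome = true := Nat.find_spec hP
    have hlt : i0 < us.length := by
      by_contra hge
      rw [List.getD_eq_getElem?_getD, List.getElem?_eq_none (Nat.le_of_not_lt hge)] at hPi0
      simp at hPi0
    rw [tailLog, List.mem_flatMap]
    refine ⟨i0, List.mem_range.mpr hlt, ?_⟩
    simp only
    apply List.mem_append_left
    rw [List.mem_filterMap]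
    refine ⟨c, by simp, ?_⟩
    rw [if_pos]
    · simp
    · refine ⟨hPi0, fun j hj => ?_⟩
      have := Nat.find_min hP hj
      simpa [Option.isNone_iff_eq_none, Option.not_isSome_iff_eq_none] using this
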